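/- Let S ⊂ ℤ_{≥0}^r be a good semigroup with weight function w, and suppose ℓ is an M-vertex of the cube (ℓ, J⁺, J⁻) (i.e., w(ℓ+eᵢ) < w(ℓ) for all i ∈ J⁺ and w(ℓ−eᵢ) < w(ℓ) for all i ∈ J⁻, where J⁺ ∩ J⁻ = ∅ and ℓ ≥ e_{J⁻}). Then w(ℓ') ≤ w(ℓ) for every vertex ℓ' of the cube, i.e., every vertex ℓ + e_{K⁺} − e_{K⁻} with K⁺ ⊆ J⁺, K⁻ ⊆ J⁻. -/

import Mathlib

open Finset

/-- Lattice points (we work in `ℤ^r`; nonnegativity is imposed via hypotheses). -/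
abbrev Pt (r : ℕ) := Fin r → ℤ

/-- The `i`-th standard basis vector. -/
def E {r : ℕ} (i : Fin r) : Pt r := Pi.single i 1

/-- `e_K = ∑_{i ∈ K} e_i`. -/
def eK {r : ℕ} (K : Finset (Fin r)) : Pt r := ∑ i ∈ K, E i

/-- `Δ̄ᵢ(ℓ) = {s ∈ S : sᵢ = ℓᵢ, sⱼ ≥ ℓⱼ ∀ j ≠ i}`. -/
def DeltaBarI {r : ℕ} (S : Set (Pt r)) (ℓ : Pt r) (i : Fin r) : Set (Pt r) :=
  {s | s ∈ S ∧ s i = ℓ i ∧ ∀ j, j ≠ i → ℓ j ≤ s j}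

/-- `Δᵢ(ℓ) = {s ∈ S : sᵢ = ℓᵢ, sⱼ > ℓⱼ ∀ j ≠ i}`. -/
def DeltaI {r : ℕ} (S : Set (Pt r)) (ℓ : Pt r) (i : Fin r) : Set (Pt r) :=
  {s | s ∈ S ∧ s i = ℓ i ∧ ∀ j, j ≠ i → ℓ j < s j}

/-- `Δ(ℓ) = ∪ᵢ Δᵢ(ℓ)`. -/
def Delta {r : ℕ} (S : Set (Pt r)) (ℓ : Pt r) : Set (Pt r) := ⋃ i, DeltaI S ℓ i

/-- A good (local) semigroup `S ⊂ ℤ_{≥0}^r` with conductor `c`. -/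
structure GoodSemigroup (r : ℕ) where
  S : Set (Pt r)
  c : Pt r
  nonneg : ∀ s ∈ S, (0 : Pt r) ≤ s
  zero_mem : (0 : Pt r) ∈ S
  add_mem : ∀ s ∈ S, ∀ t ∈ S, s + t ∈ S
  coord_zero : ∀ s ∈ S, ∀ i, s i = 0 → s = 0
  min_mem : ∀ s ∈ S, ∀ t ∈ S, s ⊓ t ∈ S
  prop3 : ∀ s ∈ S, ∀ t ∈ S, ∀ i, s i = t i →
    ∃ u ∈ S, s ⊓ t ≤ u ∧ s i < u i ∧ ∀ j, j ≠ i → s j ≠ t j → u j = (s ⊓ t) j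
  conductor_nonneg : (0 : Pt r) ≤ c
  conductor_mem : ∀ ℓ : Pt r, c ≤ ℓ → ℓ ∈ S
  conductor_min : ∀ c' : Pt r, 0 ≤ c' → (∀ ℓ, c' ≤ ℓ → ℓ ∈ S) → c ≤ c'

/-- `h` is the (combinatorial) Hilbert function of the good semigroup `G`. -/
def IsHilbert {r : ℕ} (G : GoodSemigroup r) (h : Pt r → ℤ) : Prop :=
  h 0 = 0 ∧ ∀ ℓ : Pt r, 0 ≤ ℓ → ∀ i : Fin r,
    (h (ℓ + E i) = h ℓ + 1 ↔ (DeltaBarI G.S ℓ i).Nonempty) ∧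
    (h (ℓ + E i) = h ℓ ↔ ¬ (DeltaBarI G.S ℓ i).Nonempty)

/-- `w` is the weight function of the good semigroup `G` (i.e. `w(ℓ) = 2h(ℓ) − |ℓ|`),
characterized by `w(0) = 0` and the step property. -/
def IsWeight {r : ℕ} (G : GoodSemigroup r) (w : Pt r → ℤ) : Prop :=
  w 0 = 0 ∧ ∀ ℓ : Pt r, 0 ≤ ℓ → ∀ i : Fin r,
    (w (ℓ + E i) = w ℓ + 1 ↔ (DeltaBarI G.S ℓ i).Nonempty) ∧
    (w (ℓ + E i) = w ℓ - 1 ↔ ¬ (DeltaBarI G.S ℓ i).Nonempty)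

/-- Generalized local minimum point of the weight function. -/
def GLM {r : ℕ} (w : Pt r → ℤ) (p : Pt r) : Prop :=
  0 ≤ p ∧ ∀ i : Fin r, 1 ≤ p i → w p < w (p - E i)

/-- Local minimum point of the weight function. -/
def LocMin {r : ℕ} (w : Pt r → ℤ) (p : Pt r) : Prop :=
  GLM w p ∧ ∀ i : Fin r, w p < w (p + E i)

/-!
The M-vertex conditions say that `Δ̄ᵢ(ℓ)` is empty for `i ∈ J⁺` and `Δ̄ᵢ(ℓ - eᵢ)` is nonempty
for `i ∈ J⁻`. Since `Δ̄ᵢ(a)` only shrinks when `a` grows with `aᵢ` fixed, every unit step up in a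
direction of `K⁺` starting from `ℓ`, and every unit step down in a direction of `K⁻`, lowers `w` by
one: `w(ℓ + e_{K⁺}) = w ℓ - #K⁺` and `w(ℓ - e_{K⁻}) = w ℓ - #K⁻`. As `w` changes by `±1` per unit
step, the vertex `v = ℓ + e_{K⁺} - e_{K⁻}` satisfies `w v ≤ w(ℓ + e_{K⁺}) + #K⁻` and
`w v ≤ w(ℓ - e_{K⁻}) + #K⁺`; adding the two gives `w v ≤ w ℓ`.
-/

lemma E_nonneg {r : ℕ} (i : Fin r) : 0 ≤ E i :=
  Pi.single_nonneg.2 zero_le_one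

lemma eK_nonneg {r : ℕ} (K : Finset (Fin r)) : 0 ≤ eK K :=
  Finset.sum_nonneg fun i _ => E_nonneg i

lemma eK_mono {r : ℕ} {K L : Finset (Fin r)} (h : K ⊆ L) : eK K ≤ eK L :=
  Finset.sum_le_sum_of_subset_of_nonneg h fun i _ _ => E_nonneg i

lemma eK_insert {r : ℕ} {K : Finset (Fin r)} {j : Fin r} (hj : j ∉ K) :
    eK (insert j K) = eK K + E j := by
  rw [eK, Finset.sum_insert hj, add_comm]
  rfl

lemma eK_apply_of_notMem {r : ℕ} {K : Finset (Fin r)} {j : Fin r} (hj : j ∉ K) :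
    eK K j = 0 := by
  simp only [eK, E, Finset.sum_apply, Pi.single_apply]
  exact Finset.sum_eq_zero fun i hi => if_neg fun h : j = i => hj (h ▸ hi)

lemma deltaBarI_subset_of_le {r : ℕ} (S : Set (Pt r)) {a b : Pt r} {i : Fin r}
    (hab : a ≤ b) (hi : a i = b i) : DeltaBarI S b i ⊆ DeltaBarI S a i :=
  fun _ ⟨hs, hsi, hsj⟩ => ⟨hs, hsi.trans hi.symm, fun j hj => (hab j).trans (hsj j hj)⟩

namespace IsWeight

variable {r : ℕ} {G : GoodSemigroup r} {w : Pt r → ℤ}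

lemma step (hw : IsWeight G w) {a : Pt r} (ha : 0 ≤ a) (i : Fin r) :
    w (a + E i) = w a + 1 ∨ w (a + E i) = w a - 1 := by
  by_cases h : (DeltaBarI G.S a i).Nonempty
  · exact Or.inl ((hw.2 a ha i).1.2 h)
  · exact Or.inr ((hw.2 a ha i).2.2 h)

lemma lt_add_E_iff (hw : IsWeight G w) {a : Pt r} (ha : 0 ≤ a) (i : Fin r) :
    w a < w (a + E i) ↔ (DeltaBarI G.S a i).Nonempty := by
  rw [← (hw.2 a ha i).1]
  rcases hw.step ha i with h | h <;> omega

lemma lt_add_E_of_le (hw : IsWeight G w) {a b : Pt r} {i : Fin r} (ha : 0 ≤ a) (hab : a ≤ b)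
    (hi : a i = b i) (hb : w b < w (b + E i)) : w a < w (a + E i) :=
  (hw.lt_add_E_iff ha i).2 <|
    ((hw.lt_add_E_iff (ha.trans hab) i).1 hb).mono (deltaBarI_subset_of_le G.S hab hi)

lemma add_E_lt_of_le (hw : IsWeight G w) {a b : Pt r} {i : Fin r} (ha : 0 ≤ a) (hab : a ≤ b)
    (hi : a i = b i) (h : w (a + E i) < w a) : w (b + E i) < w b := by
  have hasc := mt (hw.lt_add_E_of_le ha hab hi) (not_lt.2 h.le)
  rcases hw.step (ha.trans hab) i with hb | hb <;> omega

lemma abs_add_eK_sub_le_card (hw : IsWeight G w) {a : Pt r} (ha : 0 ≤ a)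
    (K : Finset (Fin r)) : |w (a + eK K) - w a| ≤ K.card := by
  induction K using Finset.induction_on with
  | empty => simp [eK]
  | insert j K hj ih =>
    rw [eK_insert hj, ← add_assoc, Finset.card_insert_of_notMem hj, abs_le] at *
    rcases hw.step (add_nonneg ha (eK_nonneg K)) j with h | h <;> push_cast <;> omega

lemma add_eK_eq_sub_card (hw : IsWeight G w) {a : Pt r} (ha : 0 ≤ a) {K : Finset (Fin r)}
    (hK : ∀ j ∈ K, w (a + E j) < w a) : w (a + eK K) = w a - K.card := by
  induction K using Finset.induction_on with
  | empty => simp [eK]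
  | insert j K hj ih =>
    have hdesc : w (a + eK K + E j) < w (a + eK K) :=
      hw.add_E_lt_of_le ha (le_add_of_nonneg_right (eK_nonneg K))
        (by simp [eK_apply_of_notMem hj]) (hK j (Finset.mem_insert_self j K))
    have hK' := ih fun k hk => hK k (Finset.mem_insert_of_mem hk)
    rw [eK_insert hj, ← add_assoc, Finset.card_insert_of_notMem hj]
    rcases hw.step (add_nonneg ha (eK_nonneg K)) j with h | h <;> push_cast <;> omega

lemma sub_eK_eq_sub_card (hw : IsWeight G w) {a : Pt r} {K : Finset (Fin r)}
    (hKa : eK K ≤ a) (hK : ∀ j ∈ K, w (a - E j) < w a) : w (a - eK K) = w a - K.card := by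
  induction K using Finset.induction_on with
  | empty => simp [eK]
  | insert j K hj ih =>
    rw [eK_insert hj] at hKa ⊢
    rw [← sub_sub, Finset.card_insert_of_notMem hj]
    have hKa' : eK K ≤ a := (le_add_of_nonneg_right (E_nonneg j)).trans hKa
    set b := a - eK K - E j
    have hb : 0 ≤ b := by simpa only [b, sub_sub, sub_nonneg] using hKa
    have hasc : w b < w (b + E j) := by
      refine hw.lt_add_E_of_le hb (sub_le_sub_right (sub_le_self a (eK_nonneg K)) _)
        (by simp [b, eK_apply_of_notMem hj]) ?_
      simpa only [sub_add_cancel] using hK j (Finset.mem_insert_self j K)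
    have hK' := ih hKa' fun k hk => hK k (Finset.mem_insert_of_mem hk)
    rw [sub_add_cancel] at hasc
    rcases hw.step hb j with h | h <;> rw [sub_add_cancel] at h <;> push_cast <;> omega

end IsWeight

theorem stmt17_general {r : ℕ} (G : GoodSemigroup r) (w : Pt r → ℤ) (hw : IsWeight G w)
    (ℓ : Pt r) (hl : 0 ≤ ℓ) (Jp Jm : Finset (Fin r))
    (hJm : eK Jm ≤ ℓ)
    (hMp : ∀ i ∈ Jp, w (ℓ + E i) < w ℓ)
    (hMm : ∀ i ∈ Jm, w (ℓ - E i) < w ℓ) :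
    ∀ Kp ⊆ Jp, ∀ Km ⊆ Jm, w (ℓ + eK Kp - eK Km) ≤ w ℓ := by
  intro Kp hKp Km hKm
  have hKmℓ : eK Km ≤ ℓ := (eK_mono hKm).trans hJm
  have hup := hw.add_eK_eq_sub_card hl fun j hj => hMp j (hKp hj)
  have hdown := hw.sub_eK_eq_sub_card hKmℓ fun j hj => hMm j (hKm hj)
  have hlow : 0 ≤ ℓ - eK Km := sub_nonneg.2 hKmℓ
  have h₁ := hw.abs_add_eK_sub_le_card hlow Kp
  have h₂ := hw.abs_add_eK_sub_le_card (add_nonneg hlow (eK_nonneg Kp)) Km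
  rw [sub_add_eq_add_sub] at h₁ h₂
  rw [sub_add_cancel] at h₂
  rw [abs_le] at h₁ h₂
  omega

/-- if `ℓ` is an M-vertex of the cube `(ℓ, J⁺, J⁻)`, then the weight
of every vertex of the cube is at most `w(ℓ)`. -/
theorem stmt17 {r : ℕ} (G : GoodSemigroup r) (w : Pt r → ℤ) (hw : IsWeight G w)
    (ℓ : Pt r) (hl : 0 ≤ ℓ) (Jp Jm : Finset (Fin r)) (hdisj : Disjoint Jp Jm)
    (hJm : eK Jm ≤ ℓ)
    (hMp : ∀ i ∈ Jp, w (ℓ + E i) < w ℓ)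
    (hMm : ∀ i ∈ Jm, w (ℓ - E i) < w ℓ) :
    ∀ Kp ⊆ Jp, ∀ Km ⊆ Jm, w (ℓ + eK Kp - eK Km) ≤ w ℓ :=
  stmt17_general G w hw ℓ hl Jp Jm hJm hMp hMm
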